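/- arXiv:1605.05410 — 2 statements merged into one kernel-verified Lean document; each statement's English description precedes it below -/
import Mathlib

section
/- If α > 1 and α ≥ β ≥ 0, then for all real a, b, the integral ∫_ℝ dy / (⟨y - a⟩^α ⟨y - b⟩^β) is bounded by C ⟨a - b⟩^{-β} for a constant C depending only on α, β, where ⟨x⟩ = (1 + x²)^{1/2}. -/
/-!
Write `A = ⟨y - a⟩²`, `B = ⟨y - b⟩²`, `D = ⟨a - b⟩²`. Since `D ≤ 4 max A B`, the integrand
`A^{-α/2} B^{-β/2}` is bounded by `2^β D^{-β/2} (A^{-α/2} + B^{-α/2})`: if `A ≤ B` the factor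
`B^{-β/2}` already carries the decay, and otherwise one trades `A^{-(α-β)/2} ≤ B^{-(α-β)/2}`.
Both summands on the right are translates of the integrable function `⟨y⟩^{-α}`, `α > 1`.
-/

open MeasureTheory

lemma rpow_neg_mul_rpow_neg_le_max {A B p q : ℝ} (hA : 0 < A) (hB : 0 < B) (hqp : q ≤ p) :
    A ^ (-p) * B ^ (-q) ≤ max A B ^ (-q) * (A ^ (-p) + B ^ (-p)) := by
  rcases le_total A B with hAB | hBA
  · rw [max_eq_right hAB]
    nlinarith [mul_pos (Real.rpow_pos_of_pos hB (-q)) (Real.rpow_pos_of_pos hB (-p))]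
  · rw [max_eq_left hBA]
    calc A ^ (-p) * B ^ (-q) = A ^ (-q) * (A ^ (-(p - q)) * B ^ (-q)) := by
          rw [← mul_assoc, ← Real.rpow_add hA]; ring_nf
      _ ≤ A ^ (-q) * (B ^ (-(p - q)) * B ^ (-q)) := by
          have hdecay : A ^ (-(p - q)) ≤ B ^ (-(p - q)) :=
            Real.rpow_le_rpow_of_nonpos hB hBA (by linarith)
          gcongr
      _ = A ^ (-q) * B ^ (-p) := by rw [← Real.rpow_add hB]; ring_nf
      _ ≤ A ^ (-q) * (A ^ (-p) + B ^ (-p)) := by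
          gcongr
          exact le_add_of_nonneg_left (Real.rpow_nonneg hA.le _)

lemma one_add_sq_sub_le_four_mul_max (a b y : ℝ) :
    1 + (a - b) ^ 2 ≤ 4 * max (1 + (y - a) ^ 2) (1 + (y - b) ^ 2) := by
  nlinarith [le_max_left (1 + (y - a) ^ 2) (1 + (y - b) ^ 2),
    le_max_right (1 + (y - a) ^ 2) (1 + (y - b) ^ 2), sq_nonneg (2 * y - a - b)]

lemma one_add_sq_rpow_neg_mul_le {p q : ℝ} (hq : 0 ≤ q) (hqp : q ≤ p) (a b y : ℝ) :
    (1 + (y - a) ^ 2) ^ (-p) * (1 + (y - b) ^ 2) ^ (-q) ≤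
      4 ^ q * (1 + (a - b) ^ 2) ^ (-q) *
        ((1 + (y - a) ^ 2) ^ (-p) + (1 + (y - b) ^ 2) ^ (-p)) := by
  have hmax : max (1 + (y - a) ^ 2) (1 + (y - b) ^ 2) ^ (-q) ≤
      4 ^ q * (1 + (a - b) ^ 2) ^ (-q) := by
    calc max (1 + (y - a) ^ 2) (1 + (y - b) ^ 2) ^ (-q)
        ≤ ((1 + (a - b) ^ 2) / 4) ^ (-q) :=
          Real.rpow_le_rpow_of_nonpos (by positivity)
            (by linarith [one_add_sq_sub_le_four_mul_max a b y]) (by linarith)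
      _ = 4 ^ q * (1 + (a - b) ^ 2) ^ (-q) := by
          rw [Real.div_rpow (by positivity) (by norm_num),
            Real.rpow_neg (by norm_num : (0 : ℝ) ≤ 4) q, div_inv_eq_mul]
          ring
  calc _ ≤ max (1 + (y - a) ^ 2) (1 + (y - b) ^ 2) ^ (-q) *
        ((1 + (y - a) ^ 2) ^ (-p) + (1 + (y - b) ^ 2) ^ (-p)) :=
        rpow_neg_mul_rpow_neg_le_max (by positivity) (by positivity) hqp
    _ ≤ _ := by gcongr

lemma integrable_one_add_sq_sub_rpow_neg {α : ℝ} (hα : 1 < α) (a : ℝ) :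
    Integrable (fun y : ℝ => (1 + (y - a) ^ 2) ^ (-(α / 2))) := by
  have h := integrable_rpow_neg_one_add_norm_sq (E := ℝ) (μ := volume) (r := α) (by simpa using hα)
  simpa only [Real.norm_eq_abs, sq_abs, neg_div] using h.comp_sub_right a

lemma integral_one_add_sq_rpow_neg_mul_le {α β : ℝ} (hα : 1 < α) (hβ0 : 0 ≤ β) (hβα : β ≤ α)
    (a b : ℝ) :
    ∫ y : ℝ, (1 + (y - a) ^ 2) ^ (-(α / 2)) * (1 + (y - b) ^ 2) ^ (-(β / 2)) ≤
      4 ^ (β / 2) * (2 * ∫ y : ℝ, (1 + y ^ 2) ^ (-(α / 2))) * (1 + (a - b) ^ 2) ^ (-(β / 2)) := by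
  have htranslate (c : ℝ) :
      ∫ y : ℝ, (1 + (y - c) ^ 2) ^ (-(α / 2)) = ∫ y : ℝ, (1 + y ^ 2) ^ (-(α / 2)) :=
    integral_sub_right_eq_self (fun y : ℝ => (1 + y ^ 2) ^ (-(α / 2))) c
  calc _ ≤ ∫ y : ℝ, 4 ^ (β / 2) * (1 + (a - b) ^ 2) ^ (-(β / 2)) *
        ((1 + (y - a) ^ 2) ^ (-(α / 2)) + (1 + (y - b) ^ 2) ^ (-(α / 2))) :=
        integral_mono_of_nonneg (.of_forall fun y => by positivity)
          (((integrable_one_add_sq_sub_rpow_neg hα a).add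
            (integrable_one_add_sq_sub_rpow_neg hα b)).const_mul _)
          (.of_forall fun y => one_add_sq_rpow_neg_mul_le (by linarith) (by linarith) a b y)
    _ = _ := by
        rw [integral_const_mul, integral_add (integrable_one_add_sq_sub_rpow_neg hα a)
          (integrable_one_add_sq_sub_rpow_neg hα b), htranslate, htranslate]
        ring

/-- Calculus lemma: if `α > 1` and `α ≥ β ≥ 0`, then
`∫ dy / (⟨y-a⟩^α ⟨y-b⟩^β) ≲ ⟨a-b⟩^{-β}` with constant depending only on `α, β`,
where `⟨x⟩ = (1+x²)^{1/2}`. -/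
theorem stmt0 (α β : ℝ) (hα : 1 < α) (hβ0 : 0 ≤ β) (hβα : β ≤ α) :
    ∃ C : ℝ, 0 < C ∧ ∀ a b : ℝ,
      (∫ y : ℝ, ((1 + (y - a)^2) ^ (α/2) * (1 + (y - b)^2) ^ (β/2))⁻¹) ≤
        C * ((1 + (a - b)^2) ^ (β/2))⁻¹ := by
  set I := ∫ y : ℝ, (1 + y ^ 2) ^ (-(α / 2))
  have hI : 0 ≤ I := integral_nonneg fun y => by positivity
  refine ⟨4 ^ (β / 2) * (2 * I) + 1, by positivity, fun a b => ?_⟩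
  have hpos (c : ℝ) : 0 ≤ 1 + c ^ 2 := by positivity
  simp only [mul_inv, ← Real.rpow_neg (hpos _)]
  calc _ ≤ 4 ^ (β / 2) * (2 * I) * (1 + (a - b) ^ 2) ^ (-(β / 2)) :=
        integral_one_add_sq_rpow_neg_mul_le hα hβ0 hβα a b
    _ ≤ _ := by gcongr; linarith
end

section
/- With B₁, B₂ as above and û = χ_{B₁}, v̂ = χ_{B₂}, the convolution satisfies (û * v̂)(ζ, σ) ≳ N^{-1} on a set comparable to a translate of B₁, and consequently ‖uv‖_{X^{s+α, b'}} ≳ N^{s + α - 3/2} for any fixed b'. Hence the bilinear estimate ‖uv‖_{X^{s+α,b-1}} ≲ ‖u‖_{X^{s,b}}‖v‖_{X^{s,b}_±} can only hold for all N if α ≤ 1/2. -/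
open MeasureTheory

/-- The Schrödinger Bourgain norm on the Fourier side (`F = û`). -/
noncomputable def XNorm (d : ℕ) (s b : ℝ) (F : EuclideanSpace ℝ (Fin d) × ℝ → ℂ) : ℝ :=
  (∫ p : EuclideanSpace ℝ (Fin d) × ℝ,
    (1 + ‖p.1‖^2) ^ s * (1 + (p.2 + ‖p.1‖^2)^2) ^ b * ‖F p‖^2) ^ ((1:ℝ)/2)

/-- The wave Bourgain norm on the Fourier side (`F = v̂`). -/
noncomputable def XpmNorm (d : ℕ) (ε s b : ℝ) (F : EuclideanSpace ℝ (Fin d) × ℝ → ℂ) : ℝ :=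
  (∫ p : EuclideanSpace ℝ (Fin d) × ℝ,
    (1 + ‖p.1‖^2) ^ s * (1 + (p.2 + ε * ‖p.1‖)^2) ^ b * ‖F p‖^2) ^ ((1:ℝ)/2)

/-- Space-time Fourier convolution: the transform of `uv` is `û * v̂`. -/
noncomputable def stConv (d : ℕ) (F G : EuclideanSpace ℝ (Fin d) × ℝ → ℂ)
    (p : EuclideanSpace ℝ (Fin d) × ℝ) : ℂ :=
  ∫ q : EuclideanSpace ℝ (Fin d) × ℝ, F q * G (p - q)

def SetB₁ (d : ℕ) [NeZero d] (N : ℝ) : Set (EuclideanSpace ℝ (Fin d) × ℝ) :=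
  {p | |p.1 0 - N| < N⁻¹ ∧ (∀ i : Fin d, i ≠ 0 → |p.1 i| < 1) ∧ |p.2 + N^2| < 1}

def SetB₂ (d : ℕ) [NeZero d] (N : ℝ) : Set (EuclideanSpace ℝ (Fin d) × ℝ) :=
  {p | |p.1 0| < N⁻¹ ∧ (∀ i : Fin d, i ≠ 0 → |p.1 i| < 1) ∧ |p.2| < 1}

/-! `û * v̂ (p)` is the volume of `B₁ ∩ (p - B₂)`. The half-size box `S ⊆ B₁` around
`(N e₁, -N²)` satisfies `S - S ⊆ B₂`, so `û * v̂ ≥ |S| = N⁻¹` on `S`. Since `B₁` hugs the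
paraboloid `τ = -|ξ|²`, the Schrödinger weight there is `≈ N^{2(s+α)}`, whence
`‖uv‖² ≳ N^{2(s+α)} · N⁻² · N⁻¹`. On the other side `‖u‖² ≲ N^{2s} |B₁| ≈ N^{2s-1}` and, the wave
weight being bounded on `B₂`, `‖v‖² ≲ |B₂| ≈ N⁻¹`. The bilinear estimate thus gives
`N^{s+α-3/2} ≲ N^{s-1}` for all `N ≥ 2`, i.e. `α ≤ 1/2`. -/

open Bornology Pointwise Filter Topology

namespace BilinearSharpness

lemma rpow_le_max_mul_rpow {a A M x : ℝ} (r : ℝ) (ha : 0 < a) (hM : 0 < M) (h₁ : a * M ≤ x)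
    (h₂ : x ≤ A * M) : x ^ r ≤ max (a ^ r) (A ^ r) * M ^ r := by
  have hA : 0 ≤ A :=
    nonneg_of_mul_nonneg_left ((by positivity : 0 ≤ a * M).trans (h₁.trans h₂)) hM
  rcases le_total 0 r with hr | hr
  · calc x ^ r ≤ (A * M) ^ r := Real.rpow_le_rpow (by nlinarith) h₂ hr
      _ ≤ max (a ^ r) (A ^ r) * M ^ r := by
        rw [Real.mul_rpow hA hM.le]; gcongr; exact le_max_right _ _
  · calc x ^ r ≤ (a * M) ^ r := Real.rpow_le_rpow_of_nonpos (by positivity) h₁ hr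
      _ ≤ max (a ^ r) (A ^ r) * M ^ r := by
        rw [Real.mul_rpow ha.le hM.le]; gcongr; exact le_max_left _ _

lemma min_mul_rpow_le_rpow {a A M x : ℝ} (r : ℝ) (ha : 0 < a) (hM : 0 < M) (h₁ : a * M ≤ x)
    (h₂ : x ≤ A * M) : min (a ^ r) (A ^ r) * M ^ r ≤ x ^ r := by
  have hA : 0 ≤ A :=
    nonneg_of_mul_nonneg_left ((by positivity : 0 ≤ a * M).trans (h₁.trans h₂)) hM
  rcases le_total 0 r with hr | hr
  · calc min (a ^ r) (A ^ r) * M ^ r ≤ (a * M) ^ r := by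
          rw [Real.mul_rpow ha.le hM.le]; gcongr; exact min_le_left _ _
      _ ≤ x ^ r := Real.rpow_le_rpow (by positivity) h₁ hr
  · calc min (a ^ r) (A ^ r) * M ^ r ≤ (A * M) ^ r := by
          rw [Real.mul_rpow hA hM.le]; gcongr; exact min_le_right _ _
      _ ≤ x ^ r := Real.rpow_le_rpow_of_nonpos (by nlinarith) h₂ hr

lemma one_add_sq_rpow_le {y R : ℝ} (r : ℝ) (hy : |y| ≤ R) :
    (1 + y ^ 2) ^ r ≤ max 1 ((1 + R ^ 2) ^ r) := by
  simpa using rpow_le_max_mul_rpow r one_pos one_pos (x := 1 + y ^ 2) (A := 1 + R ^ 2)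
    (by nlinarith) (by nlinarith [sq_abs y, sq_le_sq' (neg_le_of_abs_le hy) (le_of_abs_le hy)])

lemma min_le_one_add_sq_rpow {y R : ℝ} (r : ℝ) (hy : |y| ≤ R) :
    min 1 ((1 + R ^ 2) ^ r) ≤ (1 + y ^ 2) ^ r := by
  simpa using min_mul_rpow_le_rpow r one_pos one_pos (x := 1 + y ^ 2) (A := 1 + R ^ 2)
    (by nlinarith) (by nlinarith [sq_abs y, sq_le_sq' (neg_le_of_abs_le hy) (le_of_abs_le hy)])

lemma rpow_half_mul_rpow {K N : ℝ} (hK : 0 ≤ K) (hN : 0 < N) (e : ℝ) :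
    (K * N ^ e) ^ (1 / 2 : ℝ) = K ^ (1 / 2 : ℝ) * N ^ (e / 2) := by
  rw [Real.mul_rpow hK (Real.rpow_nonneg hN.le _), ← Real.rpow_mul hN.le]
  ring_nf

lemma le_of_forall_mul_rpow_le {a b c D N₀ : ℝ} (hc : 0 < c)
    (h : ∀ N ≥ N₀, c * N ^ a ≤ D * N ^ b) : a ≤ b := by
  by_contra! hab
  have hlim : Tendsto (fun N => c * N ^ (a - b)) atTop atTop :=
    (tendsto_rpow_atTop (sub_pos.2 hab)).const_mul_atTop hc
  obtain ⟨N, hND, hN⟩ :=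
    ((hlim.eventually_gt_atTop D).and (eventually_ge_atTop (max N₀ 1))).exists
  have hN0 : 0 < N := by linarith [le_max_right N₀ 1]
  have hcN := h N (le_of_max_le_left hN)
  rw [show a = (a - b) + b by ring, Real.rpow_add hN0, ← mul_assoc] at hcN
  exact hND.not_ge (le_of_mul_le_mul_right hcN (Real.rpow_pos_of_pos hN0 b))

section WeightedNorm

variable {X : Type*} [MeasurableSpace X] {μ : Measure X}

lemma integral_mul_norm_indicator_one_sq_le {w : X → ℝ} {A : Set X} {M : ℝ}
    (hA : MeasurableSet A) (hμA : μ A < ⊤) (hw : ∀ x, 0 ≤ w x) (hwM : ∀ x ∈ A, w x ≤ M) :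
    ∫ x, w x * ‖A.indicator (1 : X → ℂ) x‖ ^ 2 ∂μ ≤ M * μ.real A := by
  have hind : (fun x => w x * ‖A.indicator (1 : X → ℂ) x‖ ^ 2) = A.indicator w := by
    ext x; by_cases hx : x ∈ A <;> simp [hx]
  rw [hind, integral_indicator hA]
  refine (le_abs_self _).trans ((Real.norm_eq_abs _).symm.trans_le
    (norm_setIntegral_le_of_norm_le_const hμA fun x hx => ?_))
  rw [Real.norm_of_nonneg (hw x)]
  exact hwM x hx

end WeightedNorm

variable {d : ℕ}

local notation "Ê" => EuclideanSpace ℝ (Fin d) × ℝ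

lemma stConv_eq_convolution (F G : Ê → ℂ) :
    stConv d F G = convolution F G (ContinuousLinearMap.mul ℂ ℂ) volume := by
  ext p; simp [convolution_def, stConv]

lemma stConv_indicator_one {A B : Set Ê} (hA : MeasurableSet A) (hB : MeasurableSet B) (p : Ê) :
    stConv d (A.indicator 1) (B.indicator 1) p =
      ((volume (A ∩ {q | p - q ∈ B})).toReal : ℂ) := by
  have hAB : MeasurableSet (A ∩ {q | p - q ∈ B}) :=
    hA.inter (hB.preimage (measurable_const.sub measurable_id))
  have h : ∀ q, A.indicator (1 : Ê → ℂ) q * B.indicator 1 (p - q)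
      = (A ∩ {q | p - q ∈ B}).indicator 1 q := by
    intro q
    by_cases h1 : q ∈ A <;> by_cases h2 : p - q ∈ B <;> simp [h1, h2]
  rw [stConv, integral_congr_ae (Filter.Eventually.of_forall h)]
  exact (integral_indicator_const (1 : ℂ) hAB).trans (by simp [Measure.real])

lemma norm_stConv_indicator_one_le {A B : Set Ê} (hA : MeasurableSet A) (hB : MeasurableSet B)
    (hA' : volume A ≠ ⊤) (p : Ê) :
    ‖stConv d (A.indicator 1) (B.indicator 1) p‖ ≤ volume.real A := by
  rw [stConv_indicator_one hA hB, Complex.norm_real, Real.norm_eq_abs, abs_of_nonneg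
    ENNReal.toReal_nonneg]
  exact measureReal_mono Set.inter_subset_left hA'

lemma measureReal_le_norm_stConv_indicator_one {A B S : Set Ê} (hA : MeasurableSet A)
    (hB : MeasurableSet B) (hA' : volume A ≠ ⊤) (hSA : S ⊆ A)
    (hSB : ∀ p ∈ S, ∀ q ∈ S, p - q ∈ B) {p : Ê} (hp : p ∈ S) :
    volume.real S ≤ ‖stConv d (A.indicator 1) (B.indicator 1) p‖ := by
  rw [stConv_indicator_one hA hB, Complex.norm_real, Real.norm_of_nonneg ENNReal.toReal_nonneg]
  exact measureReal_mono (fun q hq => ⟨hSA hq, hSB p hp q hq⟩)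
    (measure_ne_top_of_subset Set.inter_subset_left hA')

lemma integrable_mul_norm_stConv_indicator_sq {A B : Set Ê} (hA : MeasurableSet A)
    (hB : MeasurableSet B) (hA' : IsBounded A) (hB' : IsBounded B) {w : Ê → ℝ}
    (hw : Continuous w) :
    Integrable fun p => w p * ‖stConv d (A.indicator 1) (B.indicator 1) p‖ ^ 2 := by
  set F := stConv d (A.indicator (1 : Ê → ℂ)) (B.indicator 1)
  have hK : IsCompact (closure (A + B)) := (hA'.add hB').isCompact_closure
  have hF_zero : ∀ p ∉ closure (A + B), F p = 0 := by
    intro p hp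
    by_contra hFp
    have hsupp := support_convolution_subset (ContinuousLinearMap.mul ℂ ℂ) (μ := volume)
      (f := A.indicator (1 : Ê → ℂ)) (g := B.indicator 1)
    rw [← stConv_eq_convolution] at hsupp
    exact hp (subset_closure (Set.add_subset_add Set.support_indicator_subset
      Set.support_indicator_subset (hsupp hFp)))
  have hF_meas : AEStronglyMeasurable F := by
    have hint : ∀ {C : Set Ê}, MeasurableSet C → IsBounded C →
        Integrable (C.indicator (1 : Ê → ℂ)) := fun hC hC' =>
      (integrable_indicator_iff hC).2 (integrableOn_const hC'.measure_lt_top.ne)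
    have : (volume : Measure Ê).IsAddRightInvariant := by
      rw [Measure.volume_eq_prod]; infer_instance
    rw [show F = _ from stConv_eq_convolution _ _]
    exact ((hint hA hA').integrable_convolution _ (hint hB hB')).aestronglyMeasurable
  have hF_sq : IntegrableOn (fun p => ‖F p‖ ^ 2) (closure (A + B)) :=
    Measure.integrableOn_of_bounded hK.measure_lt_top.ne (hF_meas.norm.pow 2)
      (M := volume.real A ^ 2) (ae_of_all _ fun p => by
        rw [Real.norm_eq_abs, abs_of_nonneg (by positivity)]
        exact pow_le_pow_left₀ (norm_nonneg _)
          (norm_stConv_indicator_one_le hA hB hA'.measure_lt_top.ne p) 2)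
  exact (hF_sq.continuousOn_mul hw.continuousOn hK).integrable_of_forall_notMem_eq_zero
    fun p hp => by simp [hF_zero p hp]

noncomputable def schrodingerWeight (s b : ℝ) (p : Ê) : ℝ :=
  (1 + ‖p.1‖ ^ 2) ^ s * (1 + (p.2 + ‖p.1‖ ^ 2) ^ 2) ^ b

noncomputable def waveWeight (ε s b : ℝ) (p : Ê) : ℝ :=
  (1 + ‖p.1‖ ^ 2) ^ s * (1 + (p.2 + ε * ‖p.1‖) ^ 2) ^ b

lemma schrodingerWeight_nonneg (s b : ℝ) (p : Ê) : 0 ≤ schrodingerWeight s b p := by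
  unfold schrodingerWeight; positivity

lemma waveWeight_nonneg (ε s b : ℝ) (p : Ê) : 0 ≤ waveWeight ε s b p := by
  unfold waveWeight; positivity

lemma continuous_schrodingerWeight (s b : ℝ) : Continuous (schrodingerWeight (d := d) s b) := by
  unfold schrodingerWeight
  exact ((by fun_prop : Continuous fun p : Ê => 1 + ‖p.1‖ ^ 2).rpow_const
    fun _ => Or.inl (by positivity)).mul ((by fun_prop : Continuous fun p : Ê =>
      1 + (p.2 + ‖p.1‖ ^ 2) ^ 2).rpow_const fun _ => Or.inl (by positivity))

lemma XNorm_eq (s b : ℝ) (F : Ê → ℂ) :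
    XNorm d s b F = (∫ p, schrodingerWeight s b p * ‖F p‖ ^ 2) ^ (1 / 2 : ℝ) := rfl

lemma XpmNorm_eq (ε s b : ℝ) (F : Ê → ℂ) :
    XpmNorm d ε s b F = (∫ p, waveWeight ε s b p * ‖F p‖ ^ 2) ^ (1 / 2 : ℝ) := rfl

lemma XNorm_nonneg (s b : ℝ) (F : Ê → ℂ) : 0 ≤ XNorm d s b F :=
  Real.rpow_nonneg (integral_nonneg fun _ => by positivity) _

lemma XpmNorm_nonneg (ε s b : ℝ) (F : Ê → ℂ) : 0 ≤ XpmNorm d ε s b F :=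
  Real.rpow_nonneg (integral_nonneg fun _ => by positivity) _

variable [NeZero d]

def Box (a r ρ c ρ' : ℝ) : Set Ê :=
  {x : EuclideanSpace ℝ (Fin d) | |x 0 - a| < r ∧ ∀ i ≠ 0, |x i| < ρ} ×ˢ Metric.ball c ρ'

lemma box_fst_eq_preimage_pi (a r ρ : ℝ) :
    {x : EuclideanSpace ℝ (Fin d) | |x 0 - a| < r ∧ ∀ i ≠ 0, |x i| < ρ} =
      (MeasurableEquiv.toLp 2 (Fin d → ℝ)).symm ⁻¹'
        Set.univ.pi fun i => if i = 0 then Metric.ball a r else Metric.ball 0 ρ := by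
  ext x
  simp only [Set.mem_preimage, Set.mem_univ_pi]
  constructor
  · rintro ⟨h0, h⟩ i
    split_ifs with hi
    · subst hi; simpa [Real.dist_eq] using h0
    · simpa [Real.dist_eq] using h i hi
  · intro h
    refine ⟨by simpa [Real.dist_eq] using h 0, fun i hi => ?_⟩
    simpa [Real.dist_eq, hi] using h i

lemma measurableSet_box (a r ρ c ρ' : ℝ) : MeasurableSet (Box (d := d) a r ρ c ρ') := by
  refine MeasurableSet.prod ?_ measurableSet_ball
  rw [box_fst_eq_preimage_pi]
  exact (MeasurableEquiv.measurable _) (MeasurableSet.univ_pi fun i => by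
    split_ifs <;> exact measurableSet_ball)

lemma volume_box (a r ρ c ρ' : ℝ) :
    volume (Box (d := d) a r ρ c ρ') =
      ENNReal.ofReal (2 * r) * ENNReal.ofReal (2 * ρ) ^ (d - 1) * ENNReal.ofReal (2 * ρ') := by
  rw [Box, Measure.volume_eq_prod, Measure.prod_prod, box_fst_eq_preimage_pi,
    (EuclideanSpace.volume_preserving_symm_measurableEquiv_toLp (Fin d)).measure_preimage
      (MeasurableSet.univ_pi fun i => by split_ifs <;> exact measurableSet_ball).nullMeasurableSet,
    volume_pi_pi]
  simp [apply_ite, Real.volume_ball, Finset.prod_ite, Finset.filter_ne', Finset.filter_eq']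

lemma measureReal_box {a r ρ c ρ' : ℝ} (hr : 0 ≤ r) (hρ : 0 ≤ ρ) (hρ' : 0 ≤ ρ') :
    volume.real (Box (d := d) a r ρ c ρ') = 2 * r * (2 * ρ) ^ (d - 1) * (2 * ρ') := by
  simp [Measure.real, volume_box, ENNReal.toReal_ofReal, hr, hρ, hρ']

lemma mem_box {a r ρ c ρ' : ℝ} {p : Ê} :
    p ∈ Box a r ρ c ρ' ↔ |p.1 0 - a| < r ∧ (∀ i ≠ 0, |p.1 i| < ρ) ∧ |p.2 - c| < ρ' := by
  simp [Box, Real.dist_eq, and_assoc]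

lemma setB₁_eq_box (N : ℝ) : SetB₁ d N = Box N N⁻¹ 1 (-N ^ 2) 1 := by
  ext p; simp [mem_box, SetB₁]

lemma setB₂_eq_box (N : ℝ) : SetB₂ d N = Box 0 N⁻¹ 1 0 1 := by
  ext p; simp [mem_box, SetB₂]

lemma measurableSet_setB₁ (N : ℝ) : MeasurableSet (SetB₁ d N) := by
  rw [setB₁_eq_box]; exact measurableSet_box ..

lemma measurableSet_setB₂ (N : ℝ) : MeasurableSet (SetB₂ d N) := by
  rw [setB₂_eq_box]; exact measurableSet_box ..

lemma box_mono {a r ρ c ρ' r₂ ρ₂ ρ'₂ : ℝ} (hr : r ≤ r₂) (hρ : ρ ≤ ρ₂) (hρ' : ρ' ≤ ρ'₂) :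
    Box (d := d) a r ρ c ρ' ⊆ Box a r₂ ρ₂ c ρ'₂ := by
  intro p hp
  obtain ⟨h0, hi, ht⟩ := mem_box.1 hp
  exact mem_box.2 ⟨h0.trans_le hr, fun i hi' => (hi i hi').trans_le hρ, ht.trans_le hρ'⟩

lemma sub_mem_box {a r ρ c ρ' : ℝ} {p q : Ê} (hp : p ∈ Box a (r / 2) (ρ / 2) c (ρ' / 2))
    (hq : q ∈ Box a (r / 2) (ρ / 2) c (ρ' / 2)) : p - q ∈ Box 0 r ρ 0 ρ' := by
  obtain ⟨hp0, hpi, hpt⟩ := mem_box.1 hp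
  obtain ⟨hq0, hqi, hqt⟩ := mem_box.1 hq
  refine mem_box.2 ⟨?_, fun i hi => ?_, ?_⟩
  · calc |(p - q).1 0 - 0| = |(p.1 0 - a) - (q.1 0 - a)| := by simp
      _ < r := by linarith [abs_sub (p.1 0 - a) (q.1 0 - a)]
  · calc |(p - q).1 i| = |p.1 i - q.1 i| := by simp
      _ < ρ := by linarith [abs_sub (p.1 i) (q.1 i), hpi i hi, hqi i hi]
  · calc |(p - q).2 - 0| = |(p.2 - c) - (q.2 - c)| := by simp
      _ < ρ' := by linarith [abs_sub (p.2 - c) (q.2 - c)]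

lemma norm_sq_le_sq_add {x : EuclideanSpace ℝ (Fin d)} {ρ : ℝ} (hx : ∀ i ≠ 0, |x i| ≤ ρ) :
    ‖x‖ ^ 2 ≤ x 0 ^ 2 + d * ρ ^ 2 := by
  rw [EuclideanSpace.norm_sq_eq]
  calc ∑ i, ‖x i‖ ^ 2 ≤ ∑ i, ((Pi.single 0 (x 0 ^ 2) : Fin d → ℝ) i + ρ ^ 2) := by
        refine Finset.sum_le_sum fun i _ => ?_
        rcases eq_or_ne i 0 with rfl | hi
        · simp [sq_nonneg]
        · simpa [hi, sq_abs] using sq_le_sq' (neg_le_of_abs_le (hx i hi)) (le_of_abs_le (hx i hi))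
    _ = x 0 ^ 2 + d * ρ ^ 2 := by simp [Finset.sum_add_distrib, Finset.sum_pi_single']

lemma isBounded_box (a r ρ c ρ' : ℝ) : IsBounded (Box (d := d) a r ρ c ρ') := by
  refine IsBounded.prod (isBounded_iff_forall_norm_le.2 ⟨1 + ((|a| + r) ^ 2 + d * ρ ^ 2), ?_⟩)
    Metric.isBounded_ball
  rintro x ⟨h0, hi⟩
  have hx0 : |x 0| ≤ |a| + r := by
    linarith [abs_sub_abs_le_abs_sub (x 0) a]
  have := norm_sq_le_sq_add fun i hi' => (hi i hi').le
  nlinarith [sq_le_sq' (neg_le_of_abs_le hx0) (le_of_abs_le hx0), norm_nonneg x]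

lemma isBounded_setB₁ (N : ℝ) : IsBounded (SetB₁ d N) := by
  rw [setB₁_eq_box]; exact isBounded_box ..

lemma isBounded_setB₂ (N : ℝ) : IsBounded (SetB₂ d N) := by
  rw [setB₂_eq_box]; exact isBounded_box ..

lemma abs_sq_sub_sq_le {t N : ℝ} (hN : 1 ≤ N) (ht : |t - N| < N⁻¹) : |t ^ 2 - N ^ 2| ≤ 3 := by
  have hN' : N * N⁻¹ = 1 := mul_inv_cancel₀ (by positivity)
  have hNinv : N⁻¹ ≤ 1 := inv_le_one_of_one_le₀ hN
  obtain ⟨h₁, h₂⟩ := abs_lt.1 ht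
  rw [abs_le]
  constructor <;> nlinarith

lemma norm_sq_mem_Icc_of_mem_setB₁ {N : ℝ} (hN : 1 ≤ N) {p : Ê} (hp : p ∈ SetB₁ d N) :
    N ^ 2 - 3 ≤ ‖p.1‖ ^ 2 ∧ ‖p.1‖ ^ 2 ≤ N ^ 2 + d + 3 := by
  obtain ⟨h0, hi, -⟩ := hp
  have h0' := abs_le.1 (abs_sq_sub_sq_le hN h0)
  have hle := norm_sq_le_sq_add (x := p.1) fun i hi' => (hi i hi').le
  have hge : |p.1 0| ^ 2 ≤ ‖p.1‖ ^ 2 :=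
    pow_le_pow_left₀ (abs_nonneg _) (PiLp.norm_apply_le p.1 0) 2
  rw [sq_abs] at hge
  constructor <;> linarith

lemma norm_le_of_mem_setB₂ {N : ℝ} (hN : 1 ≤ N) {p : Ê} (hp : p ∈ SetB₂ d N) :
    ‖p.1‖ ≤ d + 1 := by
  obtain ⟨h0, hi, -⟩ := hp
  have hle := norm_sq_le_sq_add (x := p.1) fun i hi' => (hi i hi').le
  have h0' : p.1 0 ^ 2 ≤ 1 := by
    rw [← sq_abs]; nlinarith [abs_nonneg (p.1 0), inv_le_one_of_one_le₀ hN]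
  nlinarith [norm_nonneg p.1, (Nat.cast_nonneg d : (0 : ℝ) ≤ d)]

lemma exists_schrodingerWeight_mem_Icc (s b : ℝ) : ∃ c > 0, ∃ C > 0, ∀ N ≥ 2, ∀ p ∈ SetB₁ d N,
    schrodingerWeight s b p ∈ Set.Icc (c * N ^ (2 * s)) (C * N ^ (2 * s)) := by
  refine ⟨min ((1 / 2) ^ s) (((d : ℝ) + 4) ^ s) * min 1 ((1 + ((d : ℝ) + 4) ^ 2) ^ b),
    by positivity,
    max ((1 / 2) ^ s) (((d : ℝ) + 4) ^ s) * max 1 ((1 + ((d : ℝ) + 4) ^ 2) ^ b), by positivity,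
    fun N hN p hp => ?_⟩
  obtain ⟨h₁, h₂⟩ := norm_sq_mem_Icc_of_mem_setB₁ (by linarith) hp
  have hτ : |p.2 + ‖p.1‖ ^ 2| ≤ d + 4 := by
    obtain ⟨h₃, h₄⟩ := abs_lt.1 hp.2.2
    rw [abs_le]; constructor <;> linarith
  have hN2 : N ^ (2 * s) = (N ^ 2) ^ s := by
    rw [Real.rpow_mul (by linarith), Real.rpow_two]
  have hN4 : 4 ≤ N ^ 2 := by nlinarith
  have hlo : 1 / 2 * N ^ 2 ≤ 1 + ‖p.1‖ ^ 2 := by linarith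
  have hhi : 1 + ‖p.1‖ ^ 2 ≤ (d + 4) * N ^ 2 := by
    nlinarith [mul_nonneg (Nat.cast_nonneg d : (0 : ℝ) ≤ d) (by linarith : (0 : ℝ) ≤ N ^ 2 - 4)]
  rw [hN2, schrodingerWeight]
  constructor
  · calc _ = (min ((1 / 2) ^ s) (((d : ℝ) + 4) ^ s) * (N ^ 2) ^ s) *
          min 1 ((1 + ((d : ℝ) + 4) ^ 2) ^ b) := by ring
      _ ≤ _ := mul_le_mul (min_mul_rpow_le_rpow s (by norm_num) (by positivity) hlo hhi)
          (min_le_one_add_sq_rpow b hτ) (by positivity) (by positivity)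
  · calc _ ≤ (max ((1 / 2) ^ s) (((d : ℝ) + 4) ^ s) * (N ^ 2) ^ s) *
          max 1 ((1 + ((d : ℝ) + 4) ^ 2) ^ b) :=
        mul_le_mul (rpow_le_max_mul_rpow s (by norm_num) (by positivity) hlo hhi)
          (one_add_sq_rpow_le b hτ) (by positivity) (by positivity)
      _ = _ := by ring

lemma exists_waveWeight_le (ε s b : ℝ) :
    ∃ C > 0, ∀ N ≥ 1, ∀ p ∈ SetB₂ d N, waveWeight ε s b p ≤ C := by
  refine ⟨max 1 ((1 + ((d : ℝ) + 1) ^ 2) ^ s) * max 1 ((1 + (1 + |ε| * (d + 1)) ^ 2) ^ b),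
    by positivity, fun N hN p hp => ?_⟩
  have hξ := norm_le_of_mem_setB₂ hN hp
  have hτ : |p.2 + ε * ‖p.1‖| ≤ 1 + |ε| * (d + 1) := by
    calc |p.2 + ε * ‖p.1‖| ≤ |p.2| + |ε| * ‖p.1‖ := by
          simpa [abs_mul] using abs_add_le p.2 (ε * ‖p.1‖)
      _ ≤ 1 + |ε| * (d + 1) := by gcongr; exact hp.2.2.le
  exact mul_le_mul (one_add_sq_rpow_le s (by rwa [abs_norm])) (one_add_sq_rpow_le b hτ)
    (by positivity) (by positivity)

lemma measureReal_setB₁ (N : ℝ) (hN : 0 < N) :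
    volume.real (SetB₁ d N) = 2 * N⁻¹ * 2 ^ (d - 1) * 2 := by
  rw [setB₁_eq_box, measureReal_box (by positivity) zero_le_one zero_le_one]; ring

lemma measureReal_setB₂ (N : ℝ) (hN : 0 < N) :
    volume.real (SetB₂ d N) = 2 * N⁻¹ * 2 ^ (d - 1) * 2 := by
  rw [setB₂_eq_box, measureReal_box (by positivity) zero_le_one zero_le_one]; ring

lemma exists_XNorm_indicator_setB₁_le (s b : ℝ) :
    ∃ C, ∀ N ≥ 2, XNorm d s b ((SetB₁ d N).indicator 1) ≤ C * N ^ (s - 1 / 2) := by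
  obtain ⟨_, _, K, hK, hw⟩ := exists_schrodingerWeight_mem_Icc (d := d) s b
  refine ⟨(4 * 2 ^ (d - 1) * K) ^ (1 / 2 : ℝ), fun N hN => ?_⟩
  have hN0 : 0 < N := by linarith
  have hint := integral_mul_norm_indicator_one_sq_le (μ := volume) (A := SetB₁ d N)
    (M := K * N ^ (2 * s))
    (measurableSet_setB₁ N) (isBounded_setB₁ N).measure_lt_top
    (schrodingerWeight_nonneg s b) fun p hp => (hw N hN p hp).2
  rw [measureReal_setB₁ N hN0] at hint
  rw [XNorm_eq]
  calc _ ≤ (K * N ^ (2 * s) * (2 * N⁻¹ * 2 ^ (d - 1) * 2)) ^ (1 / 2 : ℝ) :=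
        Real.rpow_le_rpow (integral_nonneg fun p =>
          mul_nonneg (schrodingerWeight_nonneg s b p) (by positivity)) hint (by norm_num)
    _ = _ := by
      rw [show K * N ^ (2 * s) * (2 * N⁻¹ * 2 ^ (d - 1) * 2) =
          4 * 2 ^ (d - 1) * K * N ^ (2 * s - 1) by
        rw [Real.rpow_sub_one hN0.ne']; ring, rpow_half_mul_rpow (by positivity) hN0]
      ring_nf

lemma exists_XpmNorm_indicator_setB₂_le (ε s b : ℝ) :
    ∃ C, ∀ N ≥ 2, XpmNorm d ε s b ((SetB₂ d N).indicator 1) ≤ C * N ^ (-1 / 2 : ℝ) := by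
  obtain ⟨K, hK, hw⟩ := exists_waveWeight_le (d := d) ε s b
  refine ⟨(4 * 2 ^ (d - 1) * K) ^ (1 / 2 : ℝ), fun N hN => ?_⟩
  have hN0 : 0 < N := by linarith
  have hint := integral_mul_norm_indicator_one_sq_le (μ := volume) (A := SetB₂ d N) (M := K)
    (measurableSet_setB₂ N) (isBounded_setB₂ N).measure_lt_top
    (waveWeight_nonneg ε s b) fun p hp => hw N (by linarith) p hp
  rw [measureReal_setB₂ N hN0] at hint
  rw [XpmNorm_eq]
  calc _ ≤ (K * (2 * N⁻¹ * 2 ^ (d - 1) * 2)) ^ (1 / 2 : ℝ) :=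
        Real.rpow_le_rpow (integral_nonneg fun p =>
          mul_nonneg (waveWeight_nonneg ε s b p) (by positivity)) hint (by norm_num)
    _ = _ := by
      rw [show K * (2 * N⁻¹ * 2 ^ (d - 1) * 2) = 4 * 2 ^ (d - 1) * K * N ^ (-1 : ℝ) by
        rw [Real.rpow_neg_one]; ring, rpow_half_mul_rpow (by positivity) hN0]

lemma exists_le_XNorm_stConv (s b : ℝ) : ∃ c : ℝ, 0 < c ∧ ∀ N : ℝ, 2 ≤ N →
    c * N ^ (s - 3 / 2) ≤
      XNorm d s b (stConv d ((SetB₁ d N).indicator 1) ((SetB₂ d N).indicator 1)) := by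
  obtain ⟨c, hc, _, _, hw⟩ := exists_schrodingerWeight_mem_Icc (d := d) s b
  refine ⟨c ^ (1 / 2 : ℝ), by positivity, fun N hN => ?_⟩
  have hN0 : 0 < N := by linarith
  set F := stConv d ((SetB₁ d N).indicator 1) ((SetB₂ d N).indicator 1)
  set S : Set Ê := Box N (N⁻¹ / 2) (1 / 2) (-N ^ 2) (1 / 2)
  have hSB₁ : S ⊆ SetB₁ d N :=
    setB₁_eq_box (d := d) N ▸ box_mono (by linarith [inv_pos.2 hN0]) (by norm_num) (by norm_num)
  have hSvol : volume.real S = N⁻¹ := by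
    rw [measureReal_box (d := d) (by positivity) (by norm_num) (by norm_num)]; simp; ring
  have hF : ∀ p ∈ S, N⁻¹ ≤ ‖F p‖ := fun p hp =>
    hSvol ▸ measureReal_le_norm_stConv_indicator_one (measurableSet_setB₁ N)
      (measurableSet_setB₂ N) (isBounded_setB₁ N).measure_lt_top.ne hSB₁
      (fun p hp q hq => setB₂_eq_box (d := d) N ▸ sub_mem_box hp hq) hp
  have hint : Integrable fun p => schrodingerWeight s b p * ‖F p‖ ^ 2 :=
    integrable_mul_norm_stConv_indicator_sq (measurableSet_setB₁ N) (measurableSet_setB₂ N)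
      (isBounded_setB₁ N) (isBounded_setB₂ N) (continuous_schrodingerWeight s b)
  have hlow : c * N ^ (2 * s) * N⁻¹ ^ 2 * N⁻¹ ≤ ∫ p, schrodingerWeight s b p * ‖F p‖ ^ 2 :=
    calc c * N ^ (2 * s) * N⁻¹ ^ 2 * N⁻¹ = c * N ^ (2 * s) * N⁻¹ ^ 2 * volume.real S := by
          rw [hSvol]
      _ ≤ ∫ p in S, schrodingerWeight s b p * ‖F p‖ ^ 2 :=
          setIntegral_ge_of_const_le_real (measurableSet_box ..)
            (isBounded_box (d := d) ..).measure_lt_top.ne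
            (fun p hp => mul_le_mul (hw N hN p (hSB₁ hp)).1
              (pow_le_pow_left₀ (by positivity) (hF p hp) 2) (by positivity)
              (schrodingerWeight_nonneg s b p)) hint.integrableOn
      _ ≤ _ := setIntegral_le_integral hint
          (ae_of_all _ fun p => mul_nonneg (schrodingerWeight_nonneg s b p) (by positivity))
  calc c ^ (1 / 2 : ℝ) * N ^ (s - 3 / 2)
        = (c * N ^ (2 * s) * N⁻¹ ^ 2 * N⁻¹) ^ (1 / 2 : ℝ) := by
        rw [show c * N ^ (2 * s) * N⁻¹ ^ 2 * N⁻¹ = c * N ^ (2 * s - 3) by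
          rw [Real.rpow_sub hN0, show (3 : ℝ) = (3 : ℕ) by norm_num, Real.rpow_natCast]; ring,
          rpow_half_mul_rpow hc.le hN0]
        ring_nf
    _ ≤ XNorm d s b F :=
        (XNorm_eq s b F).symm ▸ Real.rpow_le_rpow (by positivity) hlow (by norm_num)

end BilinearSharpness

open BilinearSharpness in
theorem stmt12_general (d : ℕ) [NeZero d] (s b b' α ε : ℝ) :
    (∃ c : ℝ, 0 < c ∧ ∀ N : ℝ, 2 ≤ N →
      c * N ^ (s + α - 3/2) ≤
        XNorm d (s + α) b' (stConv d ((SetB₁ d N).indicator 1) ((SetB₂ d N).indicator 1))) ∧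
    ((∃ C : ℝ, 0 < C ∧ ∀ N : ℝ, 2 ≤ N →
        XNorm d (s + α) (b - 1)
            (stConv d ((SetB₁ d N).indicator 1) ((SetB₂ d N).indicator 1)) ≤
          C * XNorm d s b ((SetB₁ d N).indicator 1) *
            XpmNorm d ε s b ((SetB₂ d N).indicator 1)) →
      α ≤ 1/2) := by
  refine ⟨exists_le_XNorm_stConv (s + α) b', fun ⟨C, hC, hest⟩ => ?_⟩
  obtain ⟨c, hc, hlow⟩ := exists_le_XNorm_stConv (d := d) (s + α) (b - 1)
  obtain ⟨Ku, hu⟩ := exists_XNorm_indicator_setB₁_le (d := d) s b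
  obtain ⟨Kv, hv⟩ := exists_XpmNorm_indicator_setB₂_le (d := d) ε s b
  have hexp : s + α - 3 / 2 ≤ s - 1 := le_of_forall_mul_rpow_le hc (N₀ := 2) fun N hN => by
    have hN0 : 0 < N := by linarith
    calc c * N ^ (s + α - 3 / 2) ≤ _ := hlow N hN
      _ ≤ _ := hest N hN
      _ ≤ C * (Ku * N ^ (s - 1 / 2)) * (Kv * N ^ (-1 / 2 : ℝ)) :=
        mul_le_mul (mul_le_mul_of_nonneg_left (hu N hN) hC.le) (hv N hN) (XpmNorm_nonneg ..)
          (mul_nonneg hC.le ((XNorm_nonneg ..).trans (hu N hN)))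
      _ = C * Ku * Kv * N ^ (s - 1) := by
        rw [show s - 1 = (s - 1 / 2) + (-1 / 2) by ring, Real.rpow_add hN0]; ring
  linarith

/-- Sharpness of the half-derivative gain: with `û = χ_{B₁}`, `v̂ = χ_{B₂}`, one has
`‖uv‖_{X^{s+α,b'}} ≳ N^{s+α-3/2}` for any fixed `b'`, and hence if the bilinear estimate
`‖uv‖_{X^{s+α,b-1}} ≲ ‖u‖_{X^{s,b}}‖v‖_{X^{s,b}_±}` holds for all `N`, then `α ≤ 1/2`. -/
theorem stmt12 (d : ℕ) [NeZero d] (s b b' α ε : ℝ) (hε : ε = 1 ∨ ε = -1) :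
    (∃ c : ℝ, 0 < c ∧ ∀ N : ℝ, 2 ≤ N →
      c * N ^ (s + α - 3/2) ≤
        XNorm d (s + α) b' (stConv d ((SetB₁ d N).indicator 1) ((SetB₂ d N).indicator 1))) ∧
    ((∃ C : ℝ, 0 < C ∧ ∀ N : ℝ, 2 ≤ N →
        XNorm d (s + α) (b - 1)
            (stConv d ((SetB₁ d N).indicator 1) ((SetB₂ d N).indicator 1)) ≤
          C * XNorm d s b ((SetB₁ d N).indicator 1) *
            XpmNorm d ε s b ((SetB₂ d N).indicator 1)) →
      α ≤ 1/2) :=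
  stmt12_general d s b b' α ε
end
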